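/- Let n ≥ m > ℓ ≥ 2 and let F be a field of characteristic 2. Then the group algebras FG and FH are isomorphic as F-algebras, where G = ⟨x, y, z | x^{2^n} = 1, y^{2^m} = 1, z^{2^ℓ} = 1, [y,x] = z, [z,x] = z^{-2}, [z,y] = z^{-2}⟩ and H = ⟨a, b, c | a^{2^n} = 1, b^{2^m} = a^{2^m}, c^{2^ℓ} = 1, [b,a] = c, [c,a] = c^{-2}, [c,b] = c^{-2}⟩. An isomorphism is induced by x ↦ a, y ↦ b + a + 1. -/

import Mathlib

/-!
In characteristic 2 the element `u = 1 + a + b` of a group algebra satisfies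
`u² = (1 + a² + b²) + ab(c - 1)`, and the two summands commute. Conjugation sends `c` to `c^{±1}`,
so `(c - 1) F[K] ⊆ F[K] (c - 1)`; as `(c - 1)^{2^ℓ} = 0`, every `f(c - 1)` has vanishing `2^ℓ`-th
power. Hence `u^{2^m} = 1 + a^{2^m} + b^{2^m}` for `ℓ < m`, which is `1` in `FH` and `x^{2^m}` in
`FG`, so `u` is a unit; and `[u, a] = 1 + u⁻¹b(c - 1)` has `2^ℓ`-th power `1`. As `a²` commutes
with `u` and `a` with `u²`, the units `a`, `u`, `[u, a]` satisfy the defining relations of the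
other group. This gives algebra maps `FG → FH` and `FH → FG`, both with `y ↦ 1 + x + y`, an
involution in characteristic 2; since both groups are generated by their first two generators,
the maps are mutually inverse.
-/

open FreeGroup in
/-- Relators of G = ⟨x,y,z | x^{2^n}=1, y^{2^m}=1, z^{2^ℓ}=1, [y,x]=z, [z,x]=z⁻²,
[z,y]=z⁻²⟩ (convention [y,x] = y⁻¹x⁻¹yx; generators 0 ↦ x, 1 ↦ y, 2 ↦ z). -/
def relsG1 (n m ℓ : ℕ) : Set (FreeGroup (Fin 3)) :=
  { (of 0) ^ (2 ^ n), (of 1) ^ (2 ^ m), (of 2) ^ (2 ^ ℓ),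
    (of 1)⁻¹ * (of 0)⁻¹ * of 1 * of 0 * (of 2)⁻¹,
    (of 2)⁻¹ * (of 0)⁻¹ * of 2 * of 0 * (of 2) ^ 2,
    (of 2)⁻¹ * (of 1)⁻¹ * of 2 * of 1 * (of 2) ^ 2 }

open FreeGroup in
/-- Relators of H = ⟨a,b,c | a^{2^n}=1, b^{2^m}=a^{2^m}, c^{2^ℓ}=1, [b,a]=c, [c,a]=c⁻²,
[c,b]=c⁻²⟩ (generators 0 ↦ a, 1 ↦ b, 2 ↦ c). -/
def relsH2 (n m ℓ : ℕ) : Set (FreeGroup (Fin 3)) :=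
  { (of 0) ^ (2 ^ n), (of 1) ^ (2 ^ m) * ((of 0) ^ (2 ^ m))⁻¹, (of 2) ^ (2 ^ ℓ),
    (of 1)⁻¹ * (of 0)⁻¹ * of 1 * of 0 * (of 2)⁻¹,
    (of 2)⁻¹ * (of 0)⁻¹ * of 2 * of 0 * (of 2) ^ 2,
    (of 2)⁻¹ * (of 1)⁻¹ * of 2 * of 1 * (of 2) ^ 2 }

abbrev G1 (n m ℓ : ℕ) := PresentedGroup (relsG1 n m ℓ)
abbrev H2 (n m ℓ : ℕ) := PresentedGroup (relsH2 n m ℓ)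

/-- The relations `[b, a] = c`, `[c, a] = c⁻²`, `[c, b] = c⁻²` shared by both presentations. -/
structure IsInvertedCommutator {K : Type*} [Group K] (a b c : K) : Prop where
  commutator_eq : b⁻¹ * a⁻¹ * b * a = c
  conj_left : a⁻¹ * c * a = c⁻¹
  conj_right : b⁻¹ * c * b = c⁻¹

lemma isInvertedCommutator_iff {K : Type*} [Group K] {a b c : K} :
    IsInvertedCommutator a b c ↔
      b⁻¹ * a⁻¹ * b * a = c ∧ a⁻¹ * c * a = c⁻¹ ∧ b⁻¹ * c * b = c⁻¹ :=
  ⟨fun h => ⟨h.1, h.2, h.3⟩, fun ⟨h₁, h₂, h₃⟩ => ⟨h₁, h₂, h₃⟩⟩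

namespace IsInvertedCommutator

variable {K : Type*} [Group K] {a b c : K}

lemma mul_eq_mul_mul (h : IsInvertedCommutator a b c) : b * a = a * b * c := by
  rw [← h.commutator_eq]; group

lemma inv_swap_left (h : IsInvertedCommutator a b c) : c * a = a * c⁻¹ := by
  rw [← h.conj_left]; group

lemma inv_swap_right (h : IsInvertedCommutator a b c) : c * b = b * c⁻¹ := by
  rw [← h.conj_right]; group

lemma commute_mul_self_left (h : IsInvertedCommutator a b c) : Commute (a * a) b :=
  Eq.symm <| calc b * (a * a) = b * a * a := by group
    _ = a * b * (c * a) := by rw [h.mul_eq_mul_mul]; group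
    _ = a * (b * a) * c⁻¹ := by rw [h.inv_swap_left]; group
    _ = a * a * b := by rw [h.mul_eq_mul_mul]; group

lemma commute_mul_self_right (h : IsInvertedCommutator a b c) : Commute (b * b) a :=
  calc b * b * a = b * (a * b * c) := by rw [mul_assoc, h.mul_eq_mul_mul]
    _ = b * a * b * c := by group
    _ = a * b * (c * b) * c := by rw [h.mul_eq_mul_mul]; group
    _ = a * (b * b) := by rw [h.inv_swap_right]; group

lemma of_commute {x y : K} (hx : Commute (x * x) y) (hy : Commute x (y * y)) :
    IsInvertedCommutator x y (y⁻¹ * x⁻¹ * y * x) where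
  commutator_eq := rfl
  conj_left :=
    calc x⁻¹ * (y⁻¹ * x⁻¹ * y * x) * x = x⁻¹ * y⁻¹ * x⁻¹ * (y * (x * x)) := by group
      _ = (y⁻¹ * x⁻¹ * y * x)⁻¹ := by rw [← hx.eq]; group
  conj_right :=
    calc y⁻¹ * (y⁻¹ * x⁻¹ * y * x) * y = (x * (y * y))⁻¹ * y * x * y := by group
      _ = (y⁻¹ * x⁻¹ * y * x)⁻¹ := by rw [hy.eq]; group

end IsInvertedCommutator

lemma conj_eq_or_eq_inv_of_mem_closure {K : Type*} [Group K] {c : K} {S : Set K}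
    (hS : ∀ s ∈ S, s⁻¹ * c * s = c ∨ s⁻¹ * c * s = c⁻¹) {g : K} (hg : g ∈ Subgroup.closure S) :
    g⁻¹ * c * g = c ∨ g⁻¹ * c * g = c⁻¹ := by
  induction hg using Subgroup.closure_induction with
  | mem s hs => exact hS s hs
  | one => simp
  | mul g h _ _ hg hh =>
    rw [show (g * h)⁻¹ * c * (g * h) = h⁻¹ * (g⁻¹ * c * g) * h by group]
    rcases hg with hg | hg <;> rw [hg]
    · exact hh
    · rw [show h⁻¹ * c⁻¹ * h = (h⁻¹ * c * h)⁻¹ by group]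
      rcases hh with hh | hh <;> simp [hh]
  | inv g _ hg =>
    rcases hg with hg | hg
    · left
      calc g⁻¹⁻¹ * c * g⁻¹ = g * (g⁻¹ * c * g) * g⁻¹ := by rw [hg]; group
        _ = c := by group
    · right
      calc g⁻¹⁻¹ * c * g⁻¹ = g * (g⁻¹ * c * g)⁻¹ * g⁻¹ := by rw [hg]; group
        _ = c⁻¹ := by group

lemma IsInvertedCommutator.conj_eq_or_eq_inv {K : Type*} [Group K] {a b c : K}
    (h : IsInvertedCommutator a b c) (hK : Subgroup.closure {a, b} = ⊤) (g : K) :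
    g⁻¹ * c * g = c ∨ g⁻¹ * c * g = c⁻¹ :=
  conj_eq_or_eq_inv_of_mem_closure (by simp [h.conj_left, h.conj_right]) (hK ▸ Subgroup.mem_top g)

section OneAddAdd

variable {R : Type*} [Ring R] {a b : R}

lemma commute_mul_self_one_add_add (h : Commute (a * a) b) : Commute (a * a) (1 + a + b) :=
  ((Commute.one_right _).add_right ((Commute.refl a).mul_left (Commute.refl a))).add_right h

variable [CharP R 2]

lemma one_add_add_mul_self (a b : R) :
    (1 + a + b) * (1 + a + b) = 1 + a * a + b * b + (a * b + b * a) :=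
  calc (1 + a + b) * (1 + a + b) = 1 + a * a + b * b + (a * b + b * a) + (a + a) + (b + b) := by
        noncomm_ring
    _ = 1 + a * a + b * b + (a * b + b * a) := by simp only [CharTwo.add_self_eq_zero, add_zero]

lemma commute_one_add_add_mul_self (ha : Commute (a * a) b) (hb : Commute (b * b) a) :
    Commute a ((1 + a + b) * (1 + a + b)) := by
  rw [one_add_add_mul_self]
  refine (((Commute.one_right a).add_right ((Commute.refl a).mul_right (Commute.refl a))).add_right
    hb.symm).add_right ?_
  calc a * (a * b + b * a) = a * a * b + a * b * a := by noncomm_ring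
    _ = (a * b + b * a) * a := by rw [ha.eq]; noncomm_ring

lemma one_add_add_pow_two_pow_succ (ha : Commute (a * a) b) (hb : Commute (b * b) a) {k : ℕ}
    (hs : (a * b + b * a) ^ 2 ^ k = 0) :
    (1 + a + b) ^ 2 ^ (k + 1) = 1 + a ^ 2 ^ (k + 1) + b ^ 2 ^ (k + 1) := by
  have haa : Commute (a * a) a := (Commute.refl a).mul_left (Commute.refl a)
  have hbb : Commute (b * b) b := (Commute.refl b).mul_left (Commute.refl b)
  have hz : Commute (1 + a * a + b * b) (a * b + b * a) :=
    (((Commute.one_left _).add_left ((haa.mul_right ha).add_right (ha.mul_right haa))).add_left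
      ((hb.mul_right hbb).add_right (hbb.mul_right hb)))
  have hab : Commute (1 + a * a) (b * b) :=
    (Commute.one_left _).add_left (ha.mul_right ha)
  rw [pow_succ', pow_mul, sq, one_add_add_mul_self, add_pow_char_pow_of_commute 2 k hz, hs,
    add_zero, add_pow_char_pow_of_commute 2 k hab,
    add_pow_char_pow_of_commute 2 k (Commute.one_left _), one_pow, ← sq, ← sq, ← pow_mul,
    ← pow_mul, ← pow_succ']

lemma one_add_add_one_add_add (a b : R) :
    1 + a + (1 + a + b) = b := by
  rw [← add_assoc, add_add_add_comm, CharTwo.add_self_eq_zero, CharTwo.add_self_eq_zero,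
    add_zero, zero_add]

end OneAddAdd

lemma sub_one_pow_char_pow_eq_zero {R : Type*} [Ring R] {p : ℕ} [Fact p.Prime] [CharP R p]
    {x : R} {k : ℕ} (hx : x ^ p ^ k = 1) : (x - 1) ^ p ^ k = 0 := by
  rw [sub_pow_char_pow_of_commute p k (Commute.one_right x), one_pow, hx, sub_self]

lemma exists_mul_pow_eq_mul_pow {M : Type*} [Monoid M] {t : M} (ht : ∀ f, ∃ g, t * f = g * t)
    (x : M) : ∀ k : ℕ, ∃ g, (x * t) ^ k = g * t ^ k
  | 0 => ⟨1, by simp⟩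
  | k + 1 => by
    obtain ⟨g, hg⟩ := exists_mul_pow_eq_mul_pow ht x k
    obtain ⟨g', hg'⟩ := ht g
    refine ⟨x * g', ?_⟩
    rw [pow_succ', hg, mul_assoc, ← mul_assoc t, hg', pow_succ']
    simp only [mul_assoc]

lemma mul_pow_eq_zero_of_forall_exists {M : Type*} [MonoidWithZero M] {t : M}
    (ht : ∀ f, ∃ g, t * f = g * t) (x : M) {k : ℕ} (hk : t ^ k = 0) : (x * t) ^ k = 0 := by
  obtain ⟨g, hg⟩ := exists_mul_pow_eq_mul_pow ht x k
  rw [hg, hk, mul_zero]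

lemma Units.val_inv_mul_inv_mul_mul {R : Type*} [Ring R] (U A : Rˣ) :
    ((U⁻¹ * A⁻¹ * U * A : Rˣ) : R) = 1 + ↑U⁻¹ * (↑A⁻¹ * ↑U * ↑A - ↑U) := by
  simp only [Units.val_mul, mul_sub, Units.inv_mul, mul_assoc]
  abel

namespace MonoidAlgebra

variable {F : Type*} [CommRing F] {K : Type*} [Group K]

instance charP (p : ℕ) [CharP F p] : CharP (MonoidAlgebra F K) p :=
  charP_of_injective_algebraMap' F p

lemma exists_of_sub_one_mul_eq_mul {c : K} (hc : ∀ g : K, g⁻¹ * c * g = c ∨ g⁻¹ * c * g = c⁻¹)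
    (f : MonoidAlgebra F K) : ∃ f', (of F K c - 1) * f = f' * (of F K c - 1) := by
  induction f using MonoidAlgebra.induction_on with
  | of g =>
    have key : (of F K c - 1) * of F K g = of F K g * (of F K (g⁻¹ * c * g) - 1) := by
      simp only [sub_mul, mul_sub, ← map_mul, one_mul, mul_one]
      group
    rcases hc g with h | h
    · exact ⟨of F K g, by rw [key, h]⟩
    · refine ⟨-of F K (g * c⁻¹), ?_⟩
      rw [key, h]
      simp only [mul_sub, neg_mul, mul_assoc, ← map_mul, inv_mul_cancel, mul_one]
      abel
  | add f₁ f₂ h₁ h₂ =>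
    obtain ⟨g₁, hg₁⟩ := h₁
    obtain ⟨g₂, hg₂⟩ := h₂
    exact ⟨g₁ + g₂, by rw [mul_add, hg₁, hg₂, add_mul]⟩
  | smul r f h =>
    obtain ⟨g, hg⟩ := h
    exact ⟨r • g, by rw [mul_smul_comm, hg, smul_mul_assoc]⟩

end MonoidAlgebra

namespace IsInvertedCommutator

open MonoidAlgebra

variable {F : Type*} [CommRing F] {K : Type*} [Group K] {a b c : K} {ℓ : ℕ}

lemma commute_of_mul_of_left (h : IsInvertedCommutator a b c) :
    Commute (of F K a * of F K a) (of F K b) := by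
  rw [← map_mul]; exact h.commute_mul_self_left.map _

lemma commute_of_mul_of_right (h : IsInvertedCommutator a b c) :
    Commute (of F K b * of F K b) (of F K a) := by
  rw [← map_mul]; exact h.commute_mul_self_right.map _

variable [CharP F 2]

lemma one_add_add_pow_two_pow (h : IsInvertedCommutator a b c)
    (hconj : ∀ g : K, g⁻¹ * c * g = c ∨ g⁻¹ * c * g = c⁻¹) (hc : c ^ 2 ^ ℓ = 1) {m : ℕ}
    (hℓm : ℓ < m) :
    (1 + of F K a + of F K b) ^ 2 ^ m = 1 + of F K (a ^ 2 ^ m) + of F K (b ^ 2 ^ m) := by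
  obtain ⟨k, rfl⟩ : ∃ k, m = k + 1 := ⟨m - 1, by omega⟩
  have hs : of F K a * of F K b + of F K b * of F K a = of F K (a * b) * (of F K c - 1) := by
    rw [← map_mul, ← map_mul, h.mul_eq_mul_mul, map_mul _ (a * b), mul_sub, mul_one,
      CharTwo.sub_eq_add, add_comm]
  have ht : (of F K c - 1) ^ 2 ^ k = 0 :=
    pow_eq_zero_of_le (Nat.pow_le_pow_right two_pos (show ℓ ≤ k by omega))
      (sub_one_pow_char_pow_eq_zero (by rw [← map_pow, hc, map_one]))
  rw [one_add_add_pow_two_pow_succ h.commute_of_mul_of_left h.commute_of_mul_of_right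
    (hs ▸ mul_pow_eq_zero_of_forall_exists (exists_of_sub_one_mul_eq_mul hconj) _ ht), map_pow,
    map_pow]

variable (U : (MonoidAlgebra F K)ˣ) (hU : (U : MonoidAlgebra F K) = 1 + of F K a + of F K b)
include hU

lemma units_one_add_add (h : IsInvertedCommutator a b c) :
    IsInvertedCommutator ((of F K).toHomUnits a) U
      (U⁻¹ * ((of F K).toHomUnits a)⁻¹ * U * (of F K).toHomUnits a) :=
  of_commute
    (Commute.units_of_val (by
      simp only [Units.val_mul, MonoidHom.coe_toHomUnits, hU]
      exact commute_mul_self_one_add_add h.commute_of_mul_of_left))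
    (Commute.units_of_val (by
      simp only [Units.val_mul, MonoidHom.coe_toHomUnits, hU]
      exact commute_one_add_add_mul_self h.commute_of_mul_of_left h.commute_of_mul_of_right))

lemma units_commutator_pow_two_pow (h : IsInvertedCommutator a b c)
    (hconj : ∀ g : K, g⁻¹ * c * g = c ∨ g⁻¹ * c * g = c⁻¹) (hc : c ^ 2 ^ ℓ = 1) :
    (U⁻¹ * ((of F K).toHomUnits a)⁻¹ * U * (of F K).toHomUnits a) ^ 2 ^ ℓ = 1 := by
  have hconj_a : of F K a⁻¹ * (1 + of F K a + of F K b) * of F K a - (1 + of F K a + of F K b) =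
      of F K b * (of F K c - 1) := by
    simp only [mul_add, add_mul, mul_one, ← map_mul, inv_mul_cancel, map_one]
    rw [show a⁻¹ * b * a = b * c by rw [mul_assoc, h.mul_eq_mul_mul]; group, map_mul]
    noncomm_ring
  ext
  rw [Units.val_pow_eq_pow_val, Units.val_inv_mul_inv_mul_mul, ← map_inv,
    MonoidHom.coe_toHomUnits, MonoidHom.coe_toHomUnits, hU, hconj_a,
    add_pow_char_pow_of_commute 2 ℓ (Commute.one_left _), one_pow, ← mul_assoc,
    mul_pow_eq_zero_of_forall_exists (exists_of_sub_one_mul_eq_mul hconj) _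
      (sub_one_pow_char_pow_eq_zero (by rw [← map_pow, hc, map_one])), add_zero, Units.val_one]

end IsInvertedCommutator

lemma commutator_mul_sq_eq_one_iff {M : Type*} [Group M] (x z : M) :
    z⁻¹ * x⁻¹ * z * x * z ^ 2 = 1 ↔ x⁻¹ * z * x = z⁻¹ := by
  rw [mul_eq_one_iff_eq_inv, show z⁻¹ * x⁻¹ * z * x = z⁻¹ * (x⁻¹ * z * x) by group,
    inv_mul_eq_iff_eq_mul]
  constructor <;> intro h <;> rw [h] <;> group

lemma lift_relsG1_eq_one_iff {M : Type*} [Group M] {n m ℓ : ℕ} (f : Fin 3 → M) :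
    (∀ r ∈ relsG1 n m ℓ, FreeGroup.lift f r = 1) ↔
      f 0 ^ 2 ^ n = 1 ∧ f 1 ^ 2 ^ m = 1 ∧ f 2 ^ 2 ^ ℓ = 1 ∧
        IsInvertedCommutator (f 0) (f 1) (f 2) := by
  simp only [relsG1, Set.mem_insert_iff, Set.mem_singleton_iff, forall_eq_or_imp, forall_eq,
    map_mul, map_pow, map_inv, FreeGroup.lift_apply_of, mul_inv_eq_one,
    commutator_mul_sq_eq_one_iff, isInvertedCommutator_iff]

lemma lift_relsH2_eq_one_iff {M : Type*} [Group M] {n m ℓ : ℕ} (f : Fin 3 → M) :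
    (∀ r ∈ relsH2 n m ℓ, FreeGroup.lift f r = 1) ↔
      f 0 ^ 2 ^ n = 1 ∧ f 1 ^ 2 ^ m = f 0 ^ 2 ^ m ∧ f 2 ^ 2 ^ ℓ = 1 ∧
        IsInvertedCommutator (f 0) (f 1) (f 2) := by
  simp only [relsH2, Set.mem_insert_iff, Set.mem_singleton_iff, forall_eq_or_imp, forall_eq,
    map_mul, map_pow, map_inv, FreeGroup.lift_apply_of, mul_inv_eq_one,
    commutator_mul_sq_eq_one_iff, isInvertedCommutator_iff]

namespace PresentedGroup

variable {α : Type*} {rels : Set (FreeGroup α)}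

lemma lift_of_eq_one {r : FreeGroup α} (hr : r ∈ rels) :
    FreeGroup.lift (of : α → PresentedGroup rels) r = 1 := by
  rw [show FreeGroup.lift of = mk rels from FreeGroup.ext_hom _ _ fun _ => rfl]
  exact one_of_mem hr

lemma closure_of_zero_one_eq_top {rels : Set (FreeGroup (Fin 3))}
    (h : (of 1)⁻¹ * (of 0)⁻¹ * of 1 * of 0 = (of 2 : PresentedGroup rels)) :
    Subgroup.closure {of 0, of 1} = (⊤ : Subgroup (PresentedGroup rels)) := by
  have h₀ : (of 0 : PresentedGroup rels) ∈ Subgroup.closure {of 0, of 1} :=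
    Subgroup.subset_closure (by simp)
  have h₁ : (of 1 : PresentedGroup rels) ∈ Subgroup.closure {of 0, of 1} :=
    Subgroup.subset_closure (by simp)
  refine eq_top_iff.2 fun g _ => generated_by _ _ (fun i => ?_) g
  fin_cases i
  · exact h₀
  · exact h₁
  · exact h ▸ mul_mem (mul_mem (mul_mem (inv_mem h₁) (inv_mem h₀)) h₁) h₀

lemma exists_algHom (F : Type*) [CommSemiring F] {A : Type*} [Semiring A] [Algebra F A]
    (f : α → Aˣ) (h : ∀ r ∈ rels, FreeGroup.lift f r = 1) :
    ∃ φ : MonoidAlgebra F (PresentedGroup rels) →ₐ[F] A,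
      ∀ i, φ (MonoidAlgebra.of F _ (of i)) = f i :=
  ⟨MonoidAlgebra.lift F A _ ((Units.coeHom A).comp (toGroup h)), fun i => by simp [toGroup.of]⟩

end PresentedGroup

lemma MonoidAlgebra.algHom_ext_of_closure_eq_top {F : Type*} [CommSemiring F] {K : Type*}
    [Group K] {A : Type*} [Semiring A] [Algebra F A] {S : Set K} (hS : Subgroup.closure S = ⊤)
    {φ ψ : MonoidAlgebra F K →ₐ[F] A} (h : ∀ g ∈ S, φ (of F K g) = ψ (of F K g)) : φ = ψ :=
  (MonoidAlgebra.lift F A K).symm.injective (MonoidHom.eq_of_eqOn_dense hS h)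

open MonoidAlgebra PresentedGroup

lemma G1.relations (n m ℓ : ℕ) : (of 0 : G1 n m ℓ) ^ 2 ^ n = 1 ∧ (of 1 : G1 n m ℓ) ^ 2 ^ m = 1 ∧
    (of 2 : G1 n m ℓ) ^ 2 ^ ℓ = 1 ∧ IsInvertedCommutator (of 0 : G1 n m ℓ) (of 1) (of 2) :=
  (lift_relsG1_eq_one_iff _).1 fun _ => lift_of_eq_one

lemma H2.relations (n m ℓ : ℕ) : (of 0 : H2 n m ℓ) ^ 2 ^ n = 1 ∧
    (of 1 : H2 n m ℓ) ^ 2 ^ m = (of 0 : H2 n m ℓ) ^ 2 ^ m ∧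
    (of 2 : H2 n m ℓ) ^ 2 ^ ℓ = 1 ∧ IsInvertedCommutator (of 0 : H2 n m ℓ) (of 1) (of 2) :=
  (lift_relsH2_eq_one_iff _).1 fun _ => lift_of_eq_one

section AlgHoms

variable (F : Type*) [CommRing F] [CharP F 2] {n m ℓ : ℕ}

lemma exists_algHom_G1_H2 (hℓm : ℓ < m) :
    ∃ φ : MonoidAlgebra F (G1 n m ℓ) →ₐ[F] MonoidAlgebra F (H2 n m ℓ),
      φ (MonoidAlgebra.of F _ (of 0)) = MonoidAlgebra.of F _ (of 0) ∧
      φ (MonoidAlgebra.of F _ (of 1)) =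
        1 + MonoidAlgebra.of F _ (of 0) + MonoidAlgebra.of F _ (of 1) := by
  obtain ⟨ha, hb, hc, h⟩ := H2.relations n m ℓ
  have hconj := h.conj_eq_or_eq_inv (closure_of_zero_one_eq_top h.commutator_eq)
  have hu :
      (1 + MonoidAlgebra.of F (H2 n m ℓ) (of 0) + MonoidAlgebra.of F _ (of 1)) ^ 2 ^ m = 1 := by
    rw [h.one_add_add_pow_two_pow hconj hc hℓm, hb, add_assoc, CharTwo.add_self_eq_zero, add_zero]
  obtain ⟨U, hU⟩ := IsUnit.of_pow_eq_one hu (pow_ne_zero _ two_ne_zero)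
  set A := (MonoidAlgebra.of F (H2 n m ℓ)).toHomUnits (of 0)
  obtain ⟨φ, hφ⟩ := exists_algHom (rels := relsG1 n m ℓ) F ![A, U, U⁻¹ * A⁻¹ * U * A]
    ((lift_relsG1_eq_one_iff _).2
    ⟨by simp [A, ← map_pow, ha], Units.ext (by simpa [hU] using hu),
      h.units_commutator_pow_two_pow U hU hconj hc, h.units_one_add_add U hU⟩)
  exact ⟨φ, hφ 0, (hφ 1).trans hU⟩

lemma exists_algHom_H2_G1 (hℓm : ℓ < m) :
    ∃ ψ : MonoidAlgebra F (H2 n m ℓ) →ₐ[F] MonoidAlgebra F (G1 n m ℓ),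
      ψ (MonoidAlgebra.of F _ (of 0)) = MonoidAlgebra.of F _ (of 0) ∧
      ψ (MonoidAlgebra.of F _ (of 1)) =
        1 + MonoidAlgebra.of F _ (of 0) + MonoidAlgebra.of F _ (of 1) := by
  obtain ⟨hx, hy, hz, h⟩ := G1.relations n m ℓ
  have hconj := h.conj_eq_or_eq_inv (closure_of_zero_one_eq_top h.commutator_eq)
  have hu : (1 + MonoidAlgebra.of F (G1 n m ℓ) (of 0) + MonoidAlgebra.of F _ (of 1)) ^ 2 ^ m =
      MonoidAlgebra.of F _ (of 0 ^ 2 ^ m) := by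
    rw [h.one_add_add_pow_two_pow hconj hz hℓm, hy, map_one, add_comm 1, add_assoc,
      CharTwo.add_self_eq_zero, add_zero]
  obtain ⟨U, hU⟩ := (isUnit_pow_iff (pow_ne_zero _ two_ne_zero)).1
    (hu ▸ (Group.isUnit _).map (MonoidAlgebra.of F (G1 n m ℓ)))
  set A := (MonoidAlgebra.of F (G1 n m ℓ)).toHomUnits (of 0)
  obtain ⟨ψ, hψ⟩ := exists_algHom (rels := relsH2 n m ℓ) F ![A, U, U⁻¹ * A⁻¹ * U * A]
    ((lift_relsH2_eq_one_iff _).2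
    ⟨by simp [A, ← map_pow, hx], Units.ext (by simpa [hU, A] using hu),
      h.units_commutator_pow_two_pow U hU hconj hz, h.units_one_add_add U hU⟩)
  exact ⟨ψ, hψ 0, (hψ 1).trans hU⟩

end AlgHoms

theorem stmt7 (n m ℓ : ℕ) (hmℓ : ℓ < m)
    (F : Type*) [Field F] [CharP F 2] :
    ∃ φ : MonoidAlgebra F (G1 n m ℓ) ≃ₐ[F] MonoidAlgebra F (H2 n m ℓ),
      φ (MonoidAlgebra.of F (G1 n m ℓ) (PresentedGroup.of 0)) =
        MonoidAlgebra.of F (H2 n m ℓ) (PresentedGroup.of 0) ∧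
      φ (MonoidAlgebra.of F (G1 n m ℓ) (PresentedGroup.of 1)) =
        MonoidAlgebra.of F (H2 n m ℓ) (PresentedGroup.of 1) +
          MonoidAlgebra.of F (H2 n m ℓ) (PresentedGroup.of 0) + 1 := by
  obtain ⟨φ, hφx, hφy⟩ := exists_algHom_G1_H2 F hmℓ
  obtain ⟨ψ, hψa, hψb⟩ := exists_algHom_H2_G1 F hmℓ
  have hG := closure_of_zero_one_eq_top (G1.relations n m ℓ).2.2.2.1
  have hH := closure_of_zero_one_eq_top (H2.relations n m ℓ).2.2.2.1
  refine ⟨AlgEquiv.ofAlgHom φ ψ (algHom_ext_of_closure_eq_top hH ?_)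
    (algHom_ext_of_closure_eq_top hG ?_), hφx, hφy.trans (by abel)⟩
  all_goals
    rintro _ (rfl | rfl) <;>
      simp only [AlgHom.comp_apply, AlgHom.id_apply, hφx, hφy, hψa, hψb, map_add, map_one,
        one_add_add_one_add_add]
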